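/- For every positive integer k and nonnegative integer n, $B_{n,\lambda}^{(c,-k)}(x,y)=\sum_{j=0}^{n}\sum_{m=0}^{\lfloor j/2\rfloor}\frac{\binom{n}{j}}{\binom{n-j+k}{k}}T_\lambda(n-j+k,k\mid x)(-1)^m y^{2m}\lambda^{j-2m}S_1(j,2m)$. -/

import Mathlib

/-! Since `e_λ^{1/2}(t) - e_λ^{-1/2}(t)` has no constant term, `k! Σ T(n,k|x) tⁿ/n!` equals
`t^k G(t)` with `G(t) = Σ k! T(i+k,k|x) tⁱ/(i+k)!`, and the defining relation of the
cosine-Bernoulli polynomials becomes `Σ B tⁿ/n! = cos_λ^{(y)}(t) G(t)`; the theorem is the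
coefficient of `tⁿ`. The coefficients of `cos_λ^{(y)}` come from the expansion
`(z)_{j,λ} = Σ_m S₁(j,m) λ^{j-m} z^m`, evaluated at `z = ± i y`, where the odd powers cancel.
That expansion follows from the recurrence `S₁(i+1,j+1) = S₁(i,j) - i S₁(i,j+1)`, read off from
`(1+t) d/dt (log(1+t))^{j+1} = (j+1) (log(1+t))^j`. -/

open PowerSeries Finset Complex

/-- The degenerate falling factorial `(x)_{n,λ} = x(x-λ)⋯(x-(n-1)λ)`. -/
noncomputable def dff (l x : ℂ) (n : ℕ) : ℂ := ∏ j ∈ Finset.range n, (x - j * l)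

/-- Exponential generating function of a sequence: `Σ f n * t^n / n!`. -/
noncomputable def egf (f : ℕ → ℂ) : PowerSeries ℂ := PowerSeries.mk fun n => f n / n.factorial

/-- The degenerate exponential `e_λ^x(t) = (1+λt)^{x/λ} = Σ (x)_{n,λ} t^n/n!` as a power series. -/
noncomputable def degExp (l x : ℂ) : PowerSeries ℂ := egf (dff l x)

/-- The degenerate cosine `cos_λ^{(y)}(t) = cos((y/λ) log(1+λt)) = (e_λ^{iy}(t)+e_λ^{-iy}(t))/2`. -/
noncomputable def degCos (l y : ℂ) : PowerSeries ℂ :=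
  PowerSeries.C (R := ℂ) (1/2) * (degExp l (Complex.I * y) + degExp l (-(Complex.I * y)))

/-- The degenerate sine `sin_λ^{(y)}(t) = sin((y/λ) log(1+λt)) = (e_λ^{iy}(t)-e_λ^{-iy}(t))/(2i)`. -/
noncomputable def degSin (l y : ℂ) : PowerSeries ℂ :=
  PowerSeries.C (R := ℂ) (1/(2*Complex.I)) * (degExp l (Complex.I * y) - degExp l (-(Complex.I * y)))

/-- The exponential series `e^{at} = Σ a^n t^n/n!`. -/
noncomputable def expS (a : ℂ) : PowerSeries ℂ := egf (fun n => a ^ n)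

/-- The series of `log(1+t)`. -/
noncomputable def logS : PowerSeries ℂ := PowerSeries.mk fun n => if n = 0 then 0 else (-1)^(n+1) / n

open scoped Nat

lemma coeff_egf (f : ℕ → ℂ) (n : ℕ) : coeff n (egf f) = f n / n ! :=
  coeff_mk _ _

lemma constantCoeff_degExp (l a : ℂ) : constantCoeff (degExp l a) = 1 := by
  simp [← coeff_zero_eq_constantCoeff, degExp, coeff_egf, dff]

lemma X_dvd_degExp_sub_degExp (l a b : ℂ) : (X : ℂ⟦X⟧) ∣ degExp l a - degExp l b := by
  rw [X_dvd_iff, map_sub, constantCoeff_degExp, constantCoeff_degExp, sub_self]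

lemma X_dvd_logS : (X : ℂ⟦X⟧) ∣ logS := by
  simp [X_dvd_iff, logS]

lemma coeff_one_add_X_mul_derivative (f : ℂ⟦X⟧) (n : ℕ) :
    coeff n ((1 + X) * d⁄dX ℂ f) = coeff (n + 1) f * (n + 1) + coeff n f * n := by
  rw [add_mul, one_mul, map_add, coeff_derivative]
  rcases n with _ | n
  · simp
  · rw [coeff_succ_X_mul, coeff_derivative]
    push_cast
    ring

lemma one_add_X_mul_derivative_logS : (1 + X) * d⁄dX ℂ logS = 1 := by
  ext n
  rw [coeff_one_add_X_mul_derivative, logS, coeff_mk, coeff_mk, coeff_one, if_neg n.succ_ne_zero]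
  rcases n with _ | n
  · simp
  · rw [if_neg n.succ_ne_zero, if_neg n.succ_ne_zero]
    have := Nat.cast_add_one_ne_zero (R := ℂ) n
    have := Nat.cast_add_one_ne_zero (R := ℂ) (n + 1)
    push_cast at *
    field_simp
    ring

lemma one_add_X_mul_derivative_logS_pow (j : ℕ) :
    (1 + X) * d⁄dX ℂ (logS ^ (j + 1)) = C ((j + 1 : ℕ) : ℂ) * logS ^ j := by
  rw [Derivation.leibniz_pow, nsmul_eq_mul, smul_eq_mul, Nat.add_sub_cancel, map_natCast,
    mul_left_comm, mul_left_comm _ (logS ^ j), one_add_X_mul_derivative_logS, mul_one]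

lemma sum_range_succ_eq_sum_two_mul {M : Type*} [AddCommMonoid M] (f : ℕ → M)
    (hf : ∀ m, Odd m → f m = 0) (j : ℕ) :
    ∑ m ∈ range (j + 1), f m = ∑ m ∈ range (j / 2 + 1), f (2 * m) := by
  rw [← sum_image (g := (2 * ·)) (mul_right_injective₀ two_ne_zero).injOn]
  refine (sum_subset (fun m hm => ?_) fun m hm hm' => hf m ?_).symm
  · obtain ⟨a, ha, rfl⟩ := mem_image.mp hm
    simp only [mem_range] at ha ⊢
    omega
  · rw [← Nat.not_even_iff_odd]
    rintro ⟨a, rfl⟩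
    exact hm' (mem_image.mpr ⟨a, by simp only [mem_range] at hm ⊢; omega, by ring⟩)

lemma choose_div_choose_add {n j : ℕ} (hjn : j ≤ n) (k : ℕ) :
    (n.choose j : ℂ) / (n - j + k).choose k = n ! * k ! / (j ! * (n - j + k)!) := by
  rw [Nat.cast_choose ℂ hjn, Nat.cast_choose ℂ (Nat.le_add_left k (n - j)), Nat.add_sub_cancel]
  field_simp [Nat.factorial_ne_zero]

section Stirling

variable {S1 : ℕ → ℕ → ℂ} (hS1 : ∀ j, logS ^ j = C (j ! : ℂ) * egf (fun i => S1 i j))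
include hS1

lemma S1_eq_coeff_logS_pow (i j : ℕ) : S1 i j = i ! / j ! * coeff i (logS ^ j) := by
  rw [hS1, coeff_C_mul, coeff_egf]
  field_simp [i.factorial_ne_zero, j.factorial_ne_zero]

lemma S1_zero_zero : S1 0 0 = 1 := by
  simp [S1_eq_coeff_logS_pow hS1]

lemma S1_succ_zero (n : ℕ) : S1 (n + 1) 0 = 0 := by
  simp [S1_eq_coeff_logS_pow hS1, coeff_one]

lemma S1_eq_zero_of_lt {i j : ℕ} (h : i < j) : S1 i j = 0 := by
  rw [S1_eq_coeff_logS_pow hS1, X_pow_dvd_iff.mp (pow_dvd_pow_of_dvd X_dvd_logS j) i h, mul_zero]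

lemma S1_succ_succ (i j : ℕ) : S1 (i + 1) (j + 1) = S1 i j - i * S1 i (j + 1) := by
  have h := congrArg (coeff i) (one_add_X_mul_derivative_logS_pow j)
  rw [coeff_one_add_X_mul_derivative, coeff_C_mul] at h
  simp only [S1_eq_coeff_logS_pow hS1, Nat.factorial_succ, Nat.cast_mul] at h ⊢
  have := Nat.cast_add_one_ne_zero (R := ℂ) j
  push_cast at *
  field_simp [Nat.factorial_ne_zero]
  linear_combination h

lemma dff_eq_sum_S1 (l z : ℂ) (n : ℕ) :
    dff l z n = ∑ m ∈ range (n + 1), S1 n m * l ^ (n - m) * z ^ m := by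
  induction n with
  | zero => simp [dff, S1_zero_zero hS1]
  | succ n ih =>
    set P := ∑ m ∈ range (n + 1), S1 n m * l ^ (n - m) * z ^ m
    have shift : ∑ m ∈ range (n + 1), S1 n (m + 1) * l ^ (n - m) * z ^ (m + 1) =
        l * P - S1 n 0 * l ^ (n + 1) := by
      have h := sum_range_succ' (fun m => S1 n m * l ^ (n + 1 - m) * z ^ m) (n + 1)
      rw [sum_range_succ, S1_eq_zero_of_lt hS1 n.lt_succ_self, zero_mul, zero_mul, add_zero] at h
      simp only [Nat.add_sub_add_right, Nat.sub_zero, pow_zero, mul_one] at h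
      rw [eq_sub_iff_add_eq, ← h, mul_sum]
      refine sum_congr rfl fun m hm => ?_
      rw [Nat.sub_add_comm (mem_range_succ_iff.mp hm), pow_succ]
      ring
    have split : ∑ m ∈ range (n + 1), S1 (n + 1) (m + 1) * l ^ (n - m) * z ^ (m + 1) =
        P * z - n * ∑ m ∈ range (n + 1), S1 n (m + 1) * l ^ (n - m) * z ^ (m + 1) := by
      rw [sum_mul, mul_sum, ← sum_sub_distrib]
      refine sum_congr rfl fun m _ => ?_
      rw [S1_succ_succ hS1]
      ring
    have hn : (n : ℂ) * S1 n 0 = 0 := by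
      rcases n with _ | n
      · rw [Nat.cast_zero, zero_mul]
      · rw [S1_succ_zero hS1, mul_zero]
    rw [dff, prod_range_succ, ← dff, ih, sum_range_succ', S1_succ_zero hS1]
    simp only [Nat.add_sub_add_right, zero_mul, add_zero]
    rw [split, shift]
    linear_combination -l ^ (n + 1) * hn

lemma coeff_degCos (l y : ℂ) (j : ℕ) :
    coeff j (degCos l y) =
      (∑ m ∈ range (j / 2 + 1), (-1) ^ m * y ^ (2 * m) * l ^ (j - 2 * m) * S1 j (2 * m)) / j ! := by
  rw [degCos, coeff_C_mul, map_add, degExp, degExp, coeff_egf, coeff_egf, dff_eq_sum_S1 hS1,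
    dff_eq_sum_S1 hS1, ← add_div, ← sum_add_distrib, mul_div_assoc', mul_sum,
    sum_range_succ_eq_sum_two_mul]
  · refine congrArg (· / _) (sum_congr rfl fun m _ => ?_)
    rw [(even_two_mul m).neg_pow, pow_mul, mul_pow, I_sq]
    ring
  · intro m hm
    rw [hm.neg_pow]
    ring

end Stirling

theorem stmt12_general (lam x y : ℝ) (k : ℕ) (Bc T : ℕ → ℂ) (S1 : ℕ → ℕ → ℂ)
    (hBc : PowerSeries.X ^ k * egf Bc =
      (degExp lam (1/2) - degExp lam (-(1/2))) ^ k * degExp lam x * degCos lam y)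
    (hT : (degExp lam (1/2) - degExp lam (-(1/2))) ^ k * degExp lam x =
      PowerSeries.C (R := ℂ) (Nat.factorial k) * egf T)
    (hS1 : ∀ j, logS ^ j = PowerSeries.C (R := ℂ) (Nat.factorial j) * egf (fun i => S1 i j))
    (n : ℕ) :
    Bc n = ∑ j ∈ Finset.range (n+1), ∑ m ∈ Finset.range (j/2+1),
      ((n.choose j : ℂ) / ((n-j+k).choose k : ℂ)) * T (n-j+k) * (-1)^m * (y:ℂ)^(2*m) *
        (lam:ℂ)^(j-2*m) * S1 j (2*m) := by
  obtain ⟨G, hG⟩ : X ^ k ∣ C (k ! : ℂ) * egf T :=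
    hT ▸ dvd_mul_of_dvd_left (pow_dvd_pow_of_dvd (X_dvd_degExp_sub_degExp _ _ _) k) _
  have hBcG : egf Bc = degCos lam y * G :=
    mul_left_cancel₀ (pow_ne_zero k X_ne_zero) (by rw [hBc, hT, hG]; ring)
  have coeff_G (i : ℕ) : coeff i G = k ! * T (i + k) / (i + k)! := by
    rw [← coeff_X_pow_mul G k i, ← hG, coeff_C_mul, coeff_egf, mul_div_assoc]
  have hBcn := congrArg (coeff n) hBcG
  rw [coeff_egf, coeff_mul, Nat.sum_antidiagonal_eq_sum_range_succ fun i j => coeff i _ * coeff j G,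
    div_eq_iff (Nat.cast_ne_zero.mpr n.factorial_ne_zero)] at hBcn
  rw [hBcn, sum_mul]
  refine sum_congr rfl fun j hj => ?_
  rw [coeff_degCos hS1, coeff_G, choose_div_choose_add (mem_range_succ_iff.mp hj), sum_div, sum_mul,
    sum_mul]
  refine sum_congr rfl fun m _ => ?_
  ring

theorem stmt12 (lam x y : ℝ) (k : ℕ) (hk : 0 < k) (Bc T : ℕ → ℂ) (S1 : ℕ → ℕ → ℂ)
    (hBc : PowerSeries.X ^ k * egf Bc =
      (degExp lam (1/2) - degExp lam (-(1/2))) ^ k * degExp lam x * degCos lam y)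
    (hT : (degExp lam (1/2) - degExp lam (-(1/2))) ^ k * degExp lam x =
      PowerSeries.C (R := ℂ) (Nat.factorial k) * egf T)
    (hS1 : ∀ j, logS ^ j = PowerSeries.C (R := ℂ) (Nat.factorial j) * egf (fun i => S1 i j))
    (n : ℕ) :
    Bc n = ∑ j ∈ Finset.range (n+1), ∑ m ∈ Finset.range (j/2+1),
      ((n.choose j : ℂ) / ((n-j+k).choose k : ℂ)) * T (n-j+k) * (-1)^m * (y:ℂ)^(2*m) *
        (lam:ℂ)^(j-2*m) * S1 j (2*m) :=
  stmt12_general lam x y k Bc T S1 hBc hT hS1 n
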